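/- arXiv:2211.16396 — 2 statements merged into one kernel-verified Lean document; each statement's English description precedes it below -/
import Mathlib

section
/- Let V be a finite dimensional real vector space endowed with a complex structure J (a linear map with J² = -I) and a nonzero alternating 2-form ω such that ω(JX,Y) = ω(X,JY) for all X,Y ∈ V. Then there exists a basis {u_1,…,u_q, Ju_1,…,Ju_q, e_1,…,e_p, f_1,…,f_p, Je_1,…,Je_p, Jf_1,…,Jf_p} of V such that ω(u_h,·) = ω(Ju_h,·) = 0 for all h, ω(e_k,f_l) = δ_{kl}, ω(Je_k,Jf_l) = -δ_{kl}, and all remaining pairings among the basis vectors vanish (in particular ω(e_k,Jf_l) = ω(Je_k,f_l) = ω(e_k,Je_l) = ω(f_k,Jf_l) = ω(e_k,e_l) = ω(f_k,f_l) = 0). In particular dim V = 2q + 4p, with q = 0 when ω is nondegenerate. -/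
/-!
Letting `J` act as multiplication by `i` makes `V` a complex vector space, and the compatibility
`ω(JX, Y) = ω(X, JY)` says exactly that `Ω(X, Y) = ω(X, Y) - i ω(X, JY)` is complex bilinear;
it is alternating with real part `ω`. A complex Darboux family for `Ω` (radical vectors `u_h`
and hyperbolic pairs `(e_k, f_k)`, obtained by repeatedly splitting off `span {e, f}` together
with its `Ω`-orthogonal) yields the real basis `u_h, e_k, f_k, Ju_h, Je_k, Jf_k`, and the real
and imaginary parts of the Darboux relations of `Ω` are the required relations for `ω`.
-/

open Module Submodule Set Complex
open scoped Pointwise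

namespace LinearMap

variable {K V : Type*} [Field K] [AddCommGroup V] [Module K V]

structure IsDarbouxFamily {q p : ℕ} (B : V →ₗ[K] V →ₗ[K] K) (u : Fin q → V)
    (e f : Fin p → V) : Prop where
  span_eq_top : span K (Set.range (Sum.elim u (Sum.elim e f))) = ⊤
  apply_radical : ∀ h v, B (u h) v = 0
  apply_e_f : ∀ k l, B (e k) (f l) = if k = l then 1 else 0
  apply_e_e : ∀ k l, B (e k) (e l) = 0
  apply_f_f : ∀ k l, B (f k) (f l) = 0

theorem isDarbouxFamily_zero [Module.Finite K V] :
    IsDarbouxFamily (0 : V →ₗ[K] V →ₗ[K] K) (finBasis K V) Fin.elim0 Fin.elim0 where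
  span_eq_top := by simp [Sum.elim_range, range_eq_empty]
  apply_radical := by simp
  apply_e_f := fun k => k.elim0
  apply_e_e := fun k => k.elim0
  apply_f_f := fun k => k.elim0

theorem exists_apply_eq_one {B : V →ₗ[K] V →ₗ[K] K} (hB : B ≠ 0) : ∃ x y, B x y = 1 := by
  obtain ⟨x, y, hxy⟩ : ∃ x y, B x y ≠ 0 := by
    by_contra! h
    exact hB (ext₂ h)
  exact ⟨x, (B x y)⁻¹ • y, by simp [hxy]⟩

variable {B : V →ₗ[K] V →ₗ[K] K} {e f : V}

theorem IsAlt.linearIndependent_pair (hB : B.IsAlt) (hef : B e f = 1) :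
    LinearIndependent K ![e, f] := by
  rw [LinearIndependent.pair_iff]
  intro s t hst
  have hfe : B f e = -1 := by rw [← hB.neg, hef]
  have h₁ := congrArg (B · f) hst
  have h₂ := congrArg (B · e) hst
  simp only [map_add, map_smul, add_apply, smul_apply, hef, hfe, hB e, hB f, smul_eq_mul,
    map_zero, zero_apply] at h₁ h₂
  exact ⟨by simpa using h₁, by simpa using h₂⟩

theorem IsAlt.finrank_span_pair (hB : B.IsAlt) (hef : B e f = 1) :
    finrank K (span K {e, f}) = 2 := by
  have := finrank_span_eq_card (hB.linearIndependent_pair hef)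
  rwa [Matrix.range_cons_cons_empty, Fintype.card_fin] at this

theorem IsAlt.isCompl_span_pair_orthogonal [FiniteDimensional K V] (hB : B.IsAlt)
    (hef : B e f = 1) : IsCompl (span K {e, f}) (BilinForm.orthogonal B (span K {e, f})) := by
  rw [BilinForm.isCompl_orthogonal_iff_disjoint hB.isRefl, disjoint_def]
  intro w hw hw'
  obtain ⟨a, b, rfl⟩ := mem_span_pair.mp hw
  rw [BilinForm.mem_orthogonal_iff] at hw'
  have hfe : B f e = -1 := by rw [← hB.neg, hef]
  have h₁ := hw' e (subset_span (by simp))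
  have h₂ := hw' f (subset_span (by simp))
  simp only [map_add, map_smul, hef, hfe, hB e, hB f, smul_eq_mul, mul_zero, mul_one,
    mul_neg, zero_add, add_zero, neg_eq_zero] at h₁ h₂
  simp [h₁, h₂]

theorem IsDarbouxFamily.cons [FiniteDimensional K V] (hB : B.IsAlt) (hef : B e f = 1)
    {q p : ℕ} {W : Submodule K V} (hW : W = BilinForm.orthogonal B (span K {e, f}))
    {u : Fin q → W} {e' f' : Fin p → W} (hD : IsDarbouxFamily (BilinForm.restrict B W) u e' f') :
    IsDarbouxFamily B (W.subtype ∘ u) (Fin.cons e (W.subtype ∘ e'))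
      (Fin.cons f (W.subtype ∘ f')) := by
  have hcompl : IsCompl (span K {e, f}) W := hW ▸ hB.isCompl_span_pair_orthogonal hef
  have horth : ∀ x ∈ span K {e, f}, ∀ w : W, B x w = 0 ∧ B w x = 0 := fun x hx w => by
    have : B x w = 0 := (BilinForm.mem_orthogonal_iff.mp (hW ▸ w.2)) x hx
    exact ⟨this, hB.isRefl _ _ this⟩
  have he := horth e (subset_span (by simp))
  have hf := horth f (subset_span (by simp))
  have hfe : B f e = -1 := by rw [← hB.neg, hef]
  obtain ⟨hspan, hrad, hef', hee', hff'⟩ := hD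
  simp only [BilinForm.restrict_apply, domRestrict_apply] at hrad hef' hee' hff'
  refine ⟨?_, ?_, ?_, ?_, ?_⟩
  · rw [eq_top_iff, ← hcompl.sup_eq_top]
    refine sup_le (span_le.mpr ?_) ?_
    · rintro _ (rfl | rfl)
      exacts [subset_span ⟨Sum.inr (Sum.inl 0), rfl⟩, subset_span ⟨Sum.inr (Sum.inr 0), rfl⟩]
    · have hmap := congrArg (map W.subtype) hspan
      rw [map_span, map_subtype_top] at hmap
      refine hmap.ge.trans (span_mono ?_)
      rintro _ ⟨_, ⟨i | i | i, rfl⟩, rfl⟩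
      exacts [⟨Sum.inl i, rfl⟩, ⟨Sum.inr (Sum.inl i.succ), by simp⟩,
        ⟨Sum.inr (Sum.inr i.succ), by simp⟩]
  · intro h v
    obtain ⟨x, hx, w, hw, rfl⟩ := mem_sup.mp (hcompl.sup_eq_top ▸ mem_top : v ∈ _)
    simp [(horth x hx (u h)).2, hrad h ⟨w, hw⟩]
  · intro k l
    cases k using Fin.cases <;> cases l using Fin.cases <;>
      simp [hef, he, hf, Fin.succ_ne_zero, (Fin.succ_ne_zero _).symm, hef']
  · intro k l
    cases k using Fin.cases <;> cases l using Fin.cases <;> simp [hB e, he, hee']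
  · intro k l
    cases k using Fin.cases <;> cases l using Fin.cases <;> simp [hB f, hf, hff']

theorem IsAlt.exists_isDarbouxFamily [FiniteDimensional K V] (hB : B.IsAlt) :
    ∃ (q p : ℕ) (u : Fin q → V) (e f : Fin p → V),
      IsDarbouxFamily B u e f ∧ q + 2 * p = finrank K V := by
  induction hn : finrank K V using Nat.strong_induction_on generalizing V with
  | _ n ih =>
  by_cases hB0 : B = 0
  · subst hB0
    exact ⟨_, 0, _, _, _, isDarbouxFamily_zero, by simp [hn]⟩
  obtain ⟨e, f, hef⟩ := exists_apply_eq_one hB0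
  set W := BilinForm.orthogonal B (span K {e, f})
  have hdim : 2 + finrank K W = n := by
    rw [← hn, ← hB.finrank_span_pair hef]
    exact finrank_add_eq_of_isCompl (hB.isCompl_span_pair_orthogonal hef)
  obtain ⟨q, p, u, e', f', hD, hcount⟩ :=
    ih (finrank K W) (by omega) (B := BilinForm.restrict B W) (fun w => hB w) rfl
  exact ⟨q, p + 1, _, _, _, hD.cons hB hef rfl, by omega⟩

end LinearMap

theorem Module.End.exists_complexModule {V : Type*} [AddCommGroup V] [Module ℝ V]
    (J : Module.End ℝ V) (hJ : J * J = -1) :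
    ∃ (_ : Module ℂ V) (_ : IsScalarTower ℝ ℂ V), ∀ v, (I : ℂ) • v = J v := by
  let F : ℂ →ₐ[ℝ] Module.End ℝ V := Complex.lift ⟨J, hJ⟩
  let _ : Module ℂ V := Module.compHom V F.toRingHom
  refine ⟨inferInstance, ⟨fun r c v => ?_⟩, fun v => ?_⟩
  · show F (r • c) v = r • F c v
    rw [map_smul]; rfl
  · show F I v = J v
    simp [F]

@[simp]
theorem Complex.I_smul_I_smul {V : Type*} [AddCommGroup V] [Module ℂ V] (v : V) :
    I • I • v = -v := by
  rw [smul_smul, I_mul_I, neg_one_smul]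

section ComplexStructure

variable {V : Type*} [AddCommGroup V] [Module ℝ V] [Module ℂ V] [IsScalarTower ℝ ℂ V]

theorem Complex.smul_eq_re_smul_add_im_smul_I_smul (c : ℂ) (v : V) :
    c • v = c.re • v + c.im • (I • v) := by
  conv_lhs => rw [← c.re_add_im]
  simp only [add_smul, mul_smul, ← Complex.coe_algebraMap, algebraMap_smul]

theorem Submodule.span_real_union_I_smul (s : Set V) :
    span ℝ (s ∪ I • s) = (span ℂ s).restrictScalars ℝ := by
  have hspan : span ℝ ({1, I} : Set ℂ) = ⊤ := by
    rw [← Complex.basisOneI.span_eq, Complex.coe_basisOneI, Matrix.range_cons_cons_empty]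
  rw [← span_smul_of_span_eq_top hspan, Set.insert_eq, Set.union_smul, Set.singleton_smul,
    Set.singleton_smul, one_smul]

theorem Complex.finrank_real_eq_two_mul_finrank [FiniteDimensional ℂ V] :
    finrank ℝ V = 2 * finrank ℂ V := by
  rw [← finrank_mul_finrank ℝ ℂ V, Complex.finrank_real_complex]

noncomputable def LinearMap.complexBilin (ω : V →ₗ[ℝ] V →ₗ[ℝ] ℝ)
    (hω : ∀ x y, ω (I • x) y = ω x (I • y)) : V →ₗ[ℂ] V →ₗ[ℂ] ℂ :=
  LinearMap.mk₂ ℂ (fun x y => ⟨ω x y, -ω x (I • y)⟩)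
    (fun x x' y => by apply Complex.ext <;> simp [add_comm])
    (fun c x y => by
      apply Complex.ext <;>
        simp [smul_eq_re_smul_add_im_smul_I_smul c x, hω, smul_smul]
      ring)
    (fun x y y' => by apply Complex.ext <;> simp [add_comm])
    (fun c x y => by
      apply Complex.ext <;>
        simp [smul_eq_re_smul_add_im_smul_I_smul c y, smul_comm I]
      ring)

variable {ω : V →ₗ[ℝ] V →ₗ[ℝ] ℝ} (hω : ∀ x y, ω (I • x) y = ω x (I • y))

@[simp]
theorem LinearMap.re_complexBilin (x y : V) : (ω.complexBilin hω x y).re = ω x y := rfl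

@[simp]
theorem LinearMap.im_complexBilin (x y : V) : (ω.complexBilin hω x y).im = -ω x (I • y) := rfl

theorem LinearMap.IsAlt.complexBilin (hωalt : ω.IsAlt) : (ω.complexBilin hω).IsAlt := by
  intro x
  have hskew : ω x (I • x) = 0 := by
    have := hωalt.neg x (I • x)
    rw [hω] at this
    linarith
  apply Complex.ext <;> simp [hωalt x, hskew]

theorem LinearMap.apply_of_complexBilin_eq_ofReal {x y : V} {r : ℝ}
    (h : ω.complexBilin hω x y = r) :
    ω x y = r ∧ ω x (I • y) = 0 ∧ ω (I • x) y = 0 ∧ ω (I • x) (I • y) = -r := by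
  have hre := congrArg Complex.re h
  have him := congrArg Complex.im h
  simp only [re_complexBilin, im_complexBilin, ofReal_re, ofReal_im, neg_eq_zero] at hre him
  simp [hω, hre, him]

end ComplexStructure

theorem statement1_general
    (V : Type) [AddCommGroup V] [Module ℝ V] [FiniteDimensional ℝ V]
    (J : V →ₗ[ℝ] V) (hJ : ∀ v, J (J v) = -v)
    (ω : V →ₗ[ℝ] V →ₗ[ℝ] ℝ) (hωalt : ∀ v, ω v v = 0)
    (hcompat : ∀ X Y, ω (J X) Y = ω X (J Y)) :
    ∃ (q p : ℕ) (u : Fin q → V) (e f : Fin p → V),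
      -- the family {u_h, Ju_h, e_k, f_k, Je_k, Jf_k} is a basis of V
      (LinearIndependent ℝ
          (Sum.elim u (Sum.elim (J ∘ u) (Sum.elim e (Sum.elim f (Sum.elim (J ∘ e) (J ∘ f)))))) ∧
        Submodule.span ℝ
          (Set.range
            (Sum.elim u (Sum.elim (J ∘ u) (Sum.elim e (Sum.elim f (Sum.elim (J ∘ e) (J ∘ f))))))) = ⊤) ∧
      -- the u_h, Ju_h are in the radical of ω
      (∀ h, ∀ v, ω (u h) v = 0 ∧ ω (J (u h)) v = 0) ∧
      -- ω(e_k, f_l) = δ_{kl},  ω(Je_k, Jf_l) = -δ_{kl}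
      (∀ k l, ω (e k) (f l) = if k = l then 1 else 0) ∧
      (∀ k l, ω (J (e k)) (J (f l)) = if k = l then -1 else 0) ∧
      -- all the remaining pairings among the basis vectors vanish
      (∀ k l, ω (e k) (e l) = 0) ∧
      (∀ k l, ω (f k) (f l) = 0) ∧
      (∀ k l, ω (e k) (J (f l)) = 0) ∧
      (∀ k l, ω (J (e k)) (f l) = 0) ∧
      (∀ k l, ω (e k) (J (e l)) = 0) ∧
      (∀ k l, ω (f k) (J (f l)) = 0) ∧
      (∀ k l, ω (J (e k)) (J (e l)) = 0) ∧
      (∀ k l, ω (J (f k)) (J (f l)) = 0) ∧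
      -- dimension count
      Module.finrank ℝ V = 2 * q + 4 * p ∧
      -- q = 0 when ω is nondegenerate
      ((∀ v, (∀ w, ω v w = 0) → v = 0) → q = 0) := by
  obtain ⟨_, _, hI⟩ := Module.End.exists_complexModule J (LinearMap.ext hJ)
  have : FiniteDimensional ℂ V := .of_restrictScalars_finite ℝ ℂ V
  have hω : ∀ x y, ω (I • x) y = ω x (I • y) := by simpa only [hI] using hcompat
  set Ω := ω.complexBilin hω
  obtain ⟨q, p, u, e, f, hD, hcount⟩ :=
    (LinearMap.IsAlt.complexBilin hω hωalt).exists_isDarbouxFamily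
  set b := Sum.elim u (Sum.elim (J ∘ u) (Sum.elim e (Sum.elim f (Sum.elim (J ∘ e) (J ∘ f)))))
  have hspan : span ℝ (range b) = ⊤ := by
    have hrange : range b = range (Sum.elim u (Sum.elim e f)) ∪
        I • range (Sum.elim u (Sum.elim e f)) := by
      simp only [b, Sum.elim_range, Set.smul_set_union, ← Set.range_smul, Function.comp_def, ← hI]
      ac_rfl
    rw [hrange, span_real_union_I_smul, hD.span_eq_top, restrictScalars_top]
  have hdim : finrank ℝ V = 2 * q + 4 * p := by
    rw [Complex.finrank_real_eq_two_mul_finrank, ← hcount]; ring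
  have hli := linearIndependent_of_top_le_span_of_card_eq_finrank hspan.ge (by simp [hdim]; ring)
  have hpair : ∀ {x y : V} {r : ℝ}, Ω x y = r →
      ω x y = r ∧ ω x (J y) = 0 ∧ ω (J x) y = 0 ∧ ω (J x) (J y) = -r := fun h => by
    simpa only [hI] using LinearMap.apply_of_complexBilin_eq_ofReal hω h
  have hef : ∀ k l, Ω (e k) (f l) = ((if k = l then 1 else 0 : ℝ) : ℂ) := fun k l => by
    rw [hD.apply_e_f]; split_ifs <;> simp
  have hee : ∀ k l, Ω (e k) (e l) = ((0 : ℝ) : ℂ) := by simpa using hD.apply_e_e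
  have hff : ∀ k l, Ω (f k) (f l) = ((0 : ℝ) : ℂ) := by simpa using hD.apply_f_f
  have hrad : ∀ h v, ω (u h) v = 0 := fun h v => by simpa using congrArg re (hD.apply_radical h v)
  refine ⟨q, p, u, e, f, ⟨hli, hspan⟩, fun h v => ⟨hrad h v, by rw [hcompat]; exact hrad h _⟩,
    fun k l => (hpair (hef k l)).1, fun k l => ?_, fun k l => (hpair (hee k l)).1,
    fun k l => (hpair (hff k l)).1, fun k l => (hpair (hef k l)).2.1,
    fun k l => (hpair (hef k l)).2.2.1, fun k l => (hpair (hee k l)).2.1,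
    fun k l => (hpair (hff k l)).2.1, fun k l => by simpa using (hpair (hee k l)).2.2.2,
    fun k l => by simpa using (hpair (hff k l)).2.2.2, hdim, fun hnd => ?_⟩
  · rw [(hpair (hef k l)).2.2.2]; split_ifs <;> simp
  · by_contra hq
    exact hli.ne_zero (Sum.inl ⟨0, Nat.pos_of_ne_zero hq⟩) (hnd _ (hrad _))

/-- Lemma on 2-forms compatible with a complex structure.
Let `V` be a finite dimensional real vector space with a complex structure `J`
(`J² = -I`) and a nonzero alternating 2-form `ω` such that `ω(JX,Y) = ω(X,JY)`.
Then there is a basis `{u_h, Ju_h, e_k, f_k, Je_k, Jf_k}` of `V` in which `ω` has the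
normal form described in the paper; in particular `dim V = 2q + 4p`, with `q = 0`
when `ω` is nondegenerate. -/
theorem statement1
    (V : Type) [AddCommGroup V] [Module ℝ V] [FiniteDimensional ℝ V]
    (J : V →ₗ[ℝ] V) (hJ : ∀ v, J (J v) = -v)
    (ω : V →ₗ[ℝ] V →ₗ[ℝ] ℝ) (hωalt : ∀ v, ω v v = 0) (hωne : ω ≠ 0)
    (hcompat : ∀ X Y, ω (J X) Y = ω X (J Y)) :
    ∃ (q p : ℕ) (u : Fin q → V) (e f : Fin p → V),
      -- the family {u_h, Ju_h, e_k, f_k, Je_k, Jf_k} is a basis of V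
      (LinearIndependent ℝ
          (Sum.elim u (Sum.elim (J ∘ u) (Sum.elim e (Sum.elim f (Sum.elim (J ∘ e) (J ∘ f)))))) ∧
        Submodule.span ℝ
          (Set.range
            (Sum.elim u (Sum.elim (J ∘ u) (Sum.elim e (Sum.elim f (Sum.elim (J ∘ e) (J ∘ f))))))) = ⊤) ∧
      -- the u_h, Ju_h are in the radical of ω
      (∀ h, ∀ v, ω (u h) v = 0 ∧ ω (J (u h)) v = 0) ∧
      -- ω(e_k, f_l) = δ_{kl},  ω(Je_k, Jf_l) = -δ_{kl}
      (∀ k l, ω (e k) (f l) = if k = l then 1 else 0) ∧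
      (∀ k l, ω (J (e k)) (J (f l)) = if k = l then -1 else 0) ∧
      -- all the remaining pairings among the basis vectors vanish
      (∀ k l, ω (e k) (e l) = 0) ∧
      (∀ k l, ω (f k) (f l) = 0) ∧
      (∀ k l, ω (e k) (J (f l)) = 0) ∧
      (∀ k l, ω (J (e k)) (f l) = 0) ∧
      (∀ k l, ω (e k) (J (e l)) = 0) ∧
      (∀ k l, ω (f k) (J (f l)) = 0) ∧
      (∀ k l, ω (J (e k)) (J (e l)) = 0) ∧
      (∀ k l, ω (J (f k)) (J (f l)) = 0) ∧
      -- dimension count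
      Module.finrank ℝ V = 2 * q + 4 * p ∧
      -- q = 0 when ω is nondegenerate
      ((∀ v, (∀ w, ω v w = 0) → v = 0) → q = 0) :=
  statement1_general V J hJ ω hωalt hcompat
end

section
/- Let (M,φ_i,ξ,η,g) be an Sp(n)-almost contact metric manifold. Then for every even permutation (i,j,k) of (1,2,3) and all vector fields X,Y,Z: g(N_{φ_i}(X,Y),φ_jZ) = dΦ_j(X,Y,Z) - dΦ_j(φ_iX,φ_iY,Z) - dΦ_k(φ_iX,Y,Z) - dΦ_k(X,φ_iY,Z), where N_{φ_i} = [φ_i,φ_i] + dη⊗ξ and Φ_i(X,Y) = g(X,φ_iY). -/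
/-!
We work in a Koszul-style algebraic framework for the calculus of vector fields on a
smooth manifold: `F` plays the role of the commutative ℝ-algebra of smooth functions
on the manifold `M`, and `V` plays the role of the `F`-module of smooth vector fields.
`act` is the action of vector fields on functions (as ℝ-derivations) and `lie` is the
Lie bracket of vector fields.  All the classical tensors (differentials of forms via the
global Koszul formulas, the Nijenhuis torsion, Lie derivatives, Levi-Civita connection,
curvature, ...) are expressed through their standard global formulas in this framework.
-/

structure VFCalc (F : Type) (V : Type) [CommRing F] [Algebra ℝ F]
    [AddCommGroup V] [Module F V] where
  /-- action of a vector field on a function, `X f` -/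
  act : V → F → F
  /-- Lie bracket of vector fields -/
  lie : V → V → V
  act_addV : ∀ X Y f, act (X + Y) f = act X f + act Y f
  act_smulV : ∀ (h : F) (X : V) (f : F), act (h • X) f = h * act X f
  act_add : ∀ X f g, act X (f + g) = act X f + act X g
  act_mul : ∀ X f g, act X (f * g) = act X f * g + f * act X g
  act_algebraMap : ∀ X (r : ℝ), act X (algebraMap ℝ F r) = 0
  lie_add_left : ∀ X Y Z, lie (X + Y) Z = lie X Z + lie Y Z
  lie_skew : ∀ X Y, lie X Y = -lie Y X
  lie_smul_right : ∀ (f : F) (X Y : V), lie X (f • Y) = act X f • Y + f • lie X Y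
  lie_jacobi : ∀ X Y Z, lie X (lie Y Z) + lie Y (lie Z X) + lie Z (lie X Y) = 0
  act_lie : ∀ X Y f, act (lie X Y) f = act X (act Y f) - act Y (act X f)

namespace VFCalc

variable {F V : Type} [CommRing F] [Algebra ℝ F] [AddCommGroup V] [Module F V]
variable (C : VFCalc F V)

/-- Exterior differential of a 1-form, `dη(X,Y) = X(η(Y)) - Y(η(X)) - η([X,Y])`. -/
def d1 (η : V → F) (X Y : V) : F := C.act X (η Y) - C.act Y (η X) - η (C.lie X Y)

/-- Exterior differential of a 2-form (Koszul global formula). -/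
def d2 (ω : V → V → F) (X Y Z : V) : F :=
  C.act X (ω Y Z) - C.act Y (ω X Z) + C.act Z (ω X Y)
    - ω (C.lie X Y) Z + ω (C.lie X Z) Y - ω (C.lie Y Z) X

/-- The tensor `N_φ = [φ,φ] + dη ⊗ ξ` of an almost contact structure. -/
def nij (φ : V → V) (ξ : V) (η : V → F) (X Y : V) : V :=
  C.lie (φ X) (φ Y) + φ (φ (C.lie X Y)) - φ (C.lie X (φ Y)) - φ (C.lie (φ X) Y)
    + C.d1 η X Y • ξ

/-- `ξ` is a Killing vector field for `g`, i.e. `L_ξ g = 0`. -/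
def IsKilling (g : V → V → F) (ξ : V) : Prop :=
  ∀ X Y, C.act ξ (g X Y) - g (C.lie ξ X) Y - g X (C.lie ξ Y) = 0

/-- Riemann curvature tensor `R(X,Y)Z = ∇_X ∇_Y Z - ∇_Y ∇_X Z - ∇_{[X,Y]} Z`. -/
def curv (D : V → V → V) (X Y Z : V) : V :=
  D X (D Y Z) - D Y (D X Z) - D (C.lie X Y) Z

end VFCalc

/-- An almost contact structure `(φ, ξ, η)` (without metric): `φ² = -I + η ⊗ ξ`, `η(ξ)=1`. -/
structure IsACS {F V : Type} [CommRing F] [AddCommGroup V] [Module F V]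
    (φ : V → V) (ξ : V) (η : V → F) : Prop where
  φ_add : ∀ X Y, φ (X + Y) = φ X + φ Y
  φ_smul : ∀ (f : F) (X : V), φ (f • X) = f • φ X
  η_add : ∀ X Y, η (X + Y) = η X + η Y
  η_smul : ∀ (f : F) (X : V), η (f • X) = f * η X
  φ_sq : ∀ X, φ (φ X) = -X + η X • ξ
  η_ξ : η ξ = 1

/-- An almost contact metric structure `(φ, ξ, η, g)`. -/
structure IsACMS {F V : Type} [CommRing F] [AddCommGroup V] [Module F V]
    (φ : V → V) (ξ : V) (η : V → F) (g : V → V → F) : Prop where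
  φ_add : ∀ X Y, φ (X + Y) = φ X + φ Y
  φ_smul : ∀ (f : F) (X : V), φ (f • X) = f • φ X
  η_add : ∀ X Y, η (X + Y) = η X + η Y
  η_smul : ∀ (f : F) (X : V), η (f • X) = f * η X
  g_add_left : ∀ X Y Z, g (X + Y) Z = g X Z + g Y Z
  g_smul_left : ∀ (f : F) (X Y : V), g (f • X) Y = f * g X Y
  g_symm : ∀ X Y, g X Y = g Y X
  φ_sq : ∀ X, φ (φ X) = -X + η X • ξ
  η_ξ : η ξ = 1
  g_compat : ∀ X Y, g (φ X) (φ Y) = g X Y - η X * η Y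

/-- The fundamental 2-form `Φ(X,Y) = g(X, φY)`. -/
def fund {F V : Type} [CommRing F] [AddCommGroup V] [Module F V]
    (g : V → V → F) (φ : V → V) (X Y : V) : F := g X (φ Y)

/-- The axioms of the Levi-Civita connection of `g` (which characterize it uniquely). -/
structure IsLeviCivita {F V : Type} [CommRing F] [Algebra ℝ F] [AddCommGroup V] [Module F V]
    (C : VFCalc F V) (g : V → V → F) (D : V → V → V) : Prop where
  add_left : ∀ X Y Z, D (X + Y) Z = D X Z + D Y Z
  smul_left : ∀ (f : F) (X Y : V), D (f • X) Y = f • D X Y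
  add_right : ∀ X Y Z, D X (Y + Z) = D X Y + D X Z
  leibniz : ∀ (f : F) (X Y : V), D X (f • Y) = C.act X f • Y + f • D X Y
  torsion_free : ∀ X Y, D X Y - D Y X = C.lie X Y
  metric : ∀ X Y Z, C.act X (g Y Z) = g (D X Y) Z + g Y (D X Z)

/-- Anti-normality: `N_φ = 2 dη ⊗ ξ`. -/
def AntiNormal {F V : Type} [CommRing F] [Algebra ℝ F] [AddCommGroup V] [Module F V]
    (C : VFCalc F V) (φ : V → V) (ξ : V) (η : V → F) : Prop :=
  ∀ X Y, C.nij φ ξ η X Y = (2 * C.d1 η X Y) • ξ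

/-- Anti-quasi-Sasakian: `dΦ = 0` and `N_φ = 2 dη ⊗ ξ`. -/
def IsAqS {F V : Type} [CommRing F] [Algebra ℝ F] [AddCommGroup V] [Module F V]
    (C : VFCalc F V) (φ : V → V) (ξ : V) (η : V → F) (g : V → V → F) : Prop :=
  (∀ X Y Z, C.d2 (fund g φ) X Y Z = 0) ∧ AntiNormal C φ ξ η

/-!
Each `φᵢ` maps `ξ` to a multiple of `ξ` (apply `φᵢ² = -I + η ⊗ ξ` to `φᵢ ξ`), so any two of them
commute on the line of `ξ`. As `φ₂ φ₃ = φ₁ = -φ₃ φ₂`, this gives `φ₁ ξ = -φ₁ ξ`, hence `φ₁ ξ = 0`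
because `2` is invertible in `F`; likewise for `φ₂, φ₃`. Then `η ∘ φᵢ = 0`, `g(·, ξ) = η` and `φᵢ`
is `g`-skew, and after expanding `N_{φᵢ}` and the Koszul formula for `dΦ` the identity reduces,
via the quaternionic relations, to an identity of commutative polynomials.
-/

namespace IsACMS

variable {F V : Type} [CommRing F] [AddCommGroup V] [Module F V]
  {φ : V → V} {ξ : V} {η : V → F} {g : V → V → F}

theorem map_zero (h : IsACMS φ ξ η g) : φ 0 = 0 := by
  simpa using h.φ_smul 0 0

theorem map_neg (h : IsACMS φ ξ η g) (X : V) : φ (-X) = -φ X := by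
  simpa using h.φ_smul (-1) X

theorem eta_zero (h : IsACMS φ ξ η g) : η 0 = 0 := by
  simpa using h.η_smul 0 0

theorem g_neg_left (h : IsACMS φ ξ η g) (X Y : V) : g (-X) Y = -g X Y := by
  simpa using h.g_smul_left (-1) X Y

theorem g_add_right (h : IsACMS φ ξ η g) (X Y Z : V) : g X (Y + Z) = g X Y + g X Z := by
  rw [h.g_symm, h.g_add_left, h.g_symm Y, h.g_symm Z]

theorem g_smul_right (h : IsACMS φ ξ η g) (f : F) (X Y : V) : g X (f • Y) = f * g X Y := by
  rw [h.g_symm, h.g_smul_left, h.g_symm Y]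

theorem g_neg_right (h : IsACMS φ ξ η g) (X Y : V) : g X (-Y) = -g X Y := by
  rw [h.g_symm, h.g_neg_left, h.g_symm Y]

theorem g_zero_right (h : IsACMS φ ξ η g) (X : V) : g X 0 = 0 := by
  simpa using h.g_smul_right 0 X 0

theorem phi_xi_eq_smul (h : IsACMS φ ξ η g) : φ ξ = η (φ ξ) • ξ := by
  have hsq : φ (φ ξ) = 0 := by rw [h.φ_sq, h.η_ξ, one_smul, neg_add_cancel]
  have := h.φ_sq (φ ξ)
  rw [hsq, h.map_zero] at this
  exact neg_add_eq_zero.mp this.symm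

section PhiXiZero

variable (h : IsACMS φ ξ η g) (hξ : φ ξ = 0)
include h hξ

theorem eta_phi_eq_zero (X : V) : η (φ X) = 0 := by
  have hcube : φ (φ (φ X)) = -φ X := by
    rw [h.φ_sq X, h.φ_add, h.φ_smul, h.map_neg, hξ, smul_zero, add_zero]
  have hξX : η (φ X) • ξ = 0 := by
    simpa [hcube] using h.φ_sq (φ X)
  simpa [h.η_smul, h.η_ξ, h.eta_zero] using congrArg η hξX

theorem g_xi_right (X : V) : g X ξ = η X := by
  have := h.g_compat X ξ
  rw [hξ, h.g_zero_right, h.η_ξ, mul_one] at this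
  exact sub_eq_zero.mp this.symm

theorem g_xi_left (X : V) : g ξ X = η X := by
  rw [h.g_symm, h.g_xi_right hξ]

theorem g_phi_left (X Y : V) : g (φ X) Y = -g X (φ Y) := by
  have := h.g_compat X (φ Y)
  rw [h.eta_phi_eq_zero hξ, mul_zero, sub_zero, h.φ_sq, h.g_add_right, h.g_neg_right,
    h.g_smul_right, h.g_xi_right hξ, h.eta_phi_eq_zero hξ, mul_zero, add_zero] at this
  exact neg_eq_iff_eq_neg.mp this

end PhiXiZero

end IsACMS

theorem eq_zero_of_eq_neg_of_algebra_real {F V : Type} [CommRing F] [Algebra ℝ F]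
    [AddCommGroup V] [Module F V] {v : V} (hv : v = -v) : v = 0 := by
  have htwo : (2 : F) • v = 0 := by
    rw [two_smul F v]
    nth_rewrite 2 [hv]
    exact add_neg_cancel v
  have hinv : algebraMap ℝ F 2⁻¹ * 2 = 1 := by
    rw [← map_ofNat (algebraMap ℝ F) 2, ← map_mul, inv_mul_cancel₀ two_ne_zero, map_one]
  rw [← one_smul F v, ← hinv, mul_smul, htwo, smul_zero]

theorem VFCalc.act_neg {F V : Type} [CommRing F] [Algebra ℝ F] [AddCommGroup V] [Module F V]
    (C : VFCalc F V) (X : V) (f : F) : C.act X (-f) = -C.act X f :=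
  eq_neg_of_add_eq_zero_left <| by
    rw [← C.act_add, neg_add_cancel]
    simpa using C.act_algebraMap X 0

section Quaternionic

variable {F V : Type} [CommRing F] [Algebra ℝ F] [AddCommGroup V] [Module F V]
  {φ₁ φ₂ φ₃ : V → V} {ξ : V} {η : V → F} {g : V → V → F}

theorem phi_xi_eq_zero_of_anticommute
    (h₂ : IsACMS φ₂ ξ η g) (h₃ : IsACMS φ₃ ξ η g)
    (h23 : ∀ X, φ₂ (φ₃ X) = φ₁ X) (h32 : ∀ X, φ₃ (φ₂ X) = -φ₁ X) : φ₁ ξ = 0 := by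
  obtain ⟨c₂, hc₂⟩ : ∃ c : F, φ₂ ξ = c • ξ := ⟨_, h₂.phi_xi_eq_smul⟩
  obtain ⟨c₃, hc₃⟩ : ∃ c : F, φ₃ ξ = c • ξ := ⟨_, h₃.phi_xi_eq_smul⟩
  refine eq_zero_of_eq_neg_of_algebra_real (F := F) ?_
  calc φ₁ ξ = φ₂ (φ₃ ξ) := (h23 ξ).symm
    _ = c₃ • c₂ • ξ := by rw [hc₃, h₂.φ_smul, hc₂]
    _ = c₂ • c₃ • ξ := smul_comm c₃ c₂ ξ
    _ = φ₃ (φ₂ ξ) := by rw [hc₂, h₃.φ_smul, hc₃]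
    _ = -φ₁ ξ := h32 ξ

theorem VFCalc.g_nij_phi_eq (C : VFCalc F V) (h₁ : IsACMS φ₁ ξ η g)
    (hξ : φ₁ ξ = 0)
    (h12 : ∀ X, φ₁ (φ₂ X) = φ₃ X) (h21 : ∀ X, φ₂ (φ₁ X) = -φ₃ X)
    (h13 : ∀ X, φ₁ (φ₃ X) = -φ₂ X) (h31 : ∀ X, φ₃ (φ₁ X) = φ₂ X) (X Y Z : V) :
    g (C.nij φ₁ ξ η X Y) (φ₂ Z) =
      C.d2 (fund g φ₂) X Y Z - C.d2 (fund g φ₂) (φ₁ X) (φ₁ Y) Z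
        - C.d2 (fund g φ₃) (φ₁ X) Y Z - C.d2 (fund g φ₃) X (φ₁ Y) Z := by
  have hη₂ : ∀ X, η (φ₂ X) = 0 := fun X => by rw [← h31, ← h12, h₁.eta_phi_eq_zero hξ]
  simp only [VFCalc.nij, VFCalc.d1, VFCalc.d2, fund, sub_eq_add_neg, h12, h21, h13, h31,
    h₁.φ_sq, h₁.g_add_left, h₁.g_smul_left, h₁.g_neg_left, h₁.g_neg_right,
    h₁.g_phi_left hξ, h₁.g_xi_left hξ, hη₂, C.act_neg, neg_neg, mul_zero, add_zero]
  ring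

end Quaternionic

/-- Lemma `Lemma:CM-D`.
On an `Sp(n)`-almost contact metric manifold, for every even permutation `(i,j,k)` of
`(1,2,3)` (i.e. the three cyclic permutations) and all vector fields `X, Y, Z`:
`g(N_{φᵢ}(X,Y), φⱼZ) = dΦⱼ(X,Y,Z) - dΦⱼ(φᵢX, φᵢY, Z) - dΦₖ(φᵢX, Y, Z) - dΦₖ(X, φᵢY, Z)`. -/
theorem statement10
    {F V : Type} [CommRing F] [Algebra ℝ F] [AddCommGroup V] [Module F V]
    (C : VFCalc F V) (φ₁ φ₂ φ₃ : V → V) (ξ : V) (η : V → F) (g : V → V → F)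
    (h₁ : IsACMS φ₁ ξ η g) (h₂ : IsACMS φ₂ ξ η g) (h₃ : IsACMS φ₃ ξ η g)
    -- quaternionic identities
    (h12 : ∀ X, φ₁ (φ₂ X) = φ₃ X) (h21 : ∀ X, φ₂ (φ₁ X) = -φ₃ X)
    (h23 : ∀ X, φ₂ (φ₃ X) = φ₁ X) (h32 : ∀ X, φ₃ (φ₂ X) = -φ₁ X)
    (h31 : ∀ X, φ₃ (φ₁ X) = φ₂ X) (h13 : ∀ X, φ₁ (φ₃ X) = -φ₂ X) :
    -- (i,j,k) = (1,2,3)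
    (∀ X Y Z, g (C.nij φ₁ ξ η X Y) (φ₂ Z) =
      C.d2 (fund g φ₂) X Y Z - C.d2 (fund g φ₂) (φ₁ X) (φ₁ Y) Z
        - C.d2 (fund g φ₃) (φ₁ X) Y Z - C.d2 (fund g φ₃) X (φ₁ Y) Z) ∧
    -- (i,j,k) = (2,3,1)
    (∀ X Y Z, g (C.nij φ₂ ξ η X Y) (φ₃ Z) =
      C.d2 (fund g φ₃) X Y Z - C.d2 (fund g φ₃) (φ₂ X) (φ₂ Y) Z
        - C.d2 (fund g φ₁) (φ₂ X) Y Z - C.d2 (fund g φ₁) X (φ₂ Y) Z) ∧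
    -- (i,j,k) = (3,1,2)
    (∀ X Y Z, g (C.nij φ₃ ξ η X Y) (φ₁ Z) =
      C.d2 (fund g φ₁) X Y Z - C.d2 (fund g φ₁) (φ₃ X) (φ₃ Y) Z
        - C.d2 (fund g φ₂) (φ₃ X) Y Z - C.d2 (fund g φ₂) X (φ₃ Y) Z) := by
  have hξ₁ := phi_xi_eq_zero_of_anticommute h₂ h₃ h23 h32
  have hξ₂ := phi_xi_eq_zero_of_anticommute h₃ h₁ h31 h13
  have hξ₃ := phi_xi_eq_zero_of_anticommute h₁ h₂ h12 h21
  exact ⟨C.g_nij_phi_eq h₁ hξ₁ h12 h21 h13 h31, C.g_nij_phi_eq h₂ hξ₂ h23 h32 h21 h12,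
    C.g_nij_phi_eq h₃ hξ₃ h31 h13 h32 h23⟩
end
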